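/- arXiv:math/0703131 — 2 statements merged into one kernel-verified Lean document; each statement's English description precedes it below -/
import Mathlib

section
/- A polynomial p ∈ ℂ[x₀,x₁,x₂,x₃] satisfies σ_t p = p for all t ∈ ℂ if and only if p lies in the ℂ-subalgebra generated by the four polynomials x₀, x₀x₂ − x₁², x₁³ + (1/2)x₀²x₃ − (3/2)x₀x₁x₂, and 2x₀x₁x₂x₃ − (1/3)x₀²x₃² + x₁²x₂² − (4/3)x₁³x₃ − (4/3)x₀x₂³; that is, the subalgebra of σ-invariants equals the Algebra.adjoin of these four elements. -/
/-!
Taking `t = -x₁/x₀` in `σ_t p = p` gives `p(x) = p(x₀, 0, P/x₀, 2G/x₀²)`, where `P = x₀x₂ - x₁²`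
and `G` is the third generator, so `x₀ᴺ p` is a polynomial in `x₀, P, G` for large `N`. It then
suffices to divide by `x₀` inside the algebra `A = ℂ[x₀, P, G, D]`. If `F(x₀, P, G, D)` vanishes on
`x₀ = 0`, where `(P, G, D)` becomes `(-x₁², x₁³, -(4/3)x₁³x₃)` and the only relation left is
`G² + P³ = 0`, then `F ∈ (y₀, y₂² + y₁³)`; and the syzygy `G² + P³ = -(3/4)x₀²D` makes both
generators of that ideal divisible by `x₀` within `A`.
-/

open MvPolynomial

/-- The `ℂ`-algebra endomorphism of `ℂ[x₀,x₁,x₂,x₃]` given by `σ_t(x₀) = x₀`,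
`σ_t(x₁) = x₁ + t·x₀`, `σ_t(x₂) = x₂ + 2t·x₁ + t²·x₀`,
`σ_t(x₃) = x₃ + 3t·x₂ + 3t²·x₁ + t³·x₀` (the `ℂ⁺`-action on `Sym³(ℂ²)`). -/
noncomputable def sigma (t : ℂ) :
    MvPolynomial (Fin 4) ℂ →ₐ[ℂ] MvPolynomial (Fin 4) ℂ :=
  aeval ![X 0,
          X 1 + C t * X 0,
          X 2 + C (2 * t) * X 1 + C (t ^ 2) * X 0,
          X 3 + C (3 * t) * X 2 + C (3 * t ^ 2) * X 1 + C (t ^ 3) * X 0]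

namespace MvPolynomial

theorem eval_aeval {R σ τ : Type*} [CommSemiring R] (x : τ → R) (v : σ → MvPolynomial τ R)
    (q : MvPolynomial σ R) : eval x (aeval v q) = eval (fun i => eval x (v i)) q :=
  comp_aeval_apply (f := v) (aeval x) q

theorem eq_of_eval_eq_of_ne_zero {R σ : Type*} [CommRing R] [IsDomain R] [Infinite R]
    {p q : MvPolynomial σ R} (i : σ) (h : ∀ x : σ → R, x i ≠ 0 → eval x p = eval x q) :
    p = q := by
  refine mul_left_cancel₀ (X_ne_zero i) (MvPolynomial.funext fun x => ?_)
  by_cases hx : x i = 0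
  · simp [hx]
  · simp [h x hx]

theorem exists_pow_mul_eval_div_eq {K σ : Type*} [Field K] (i₀ : σ) (w : σ → ℕ)
    (r : MvPolynomial σ K) : ∃ (N : ℕ) (F : MvPolynomial σ K), ∀ y : σ → K, y i₀ ≠ 0 →
      y i₀ ^ N * eval (fun i => y i / y i₀ ^ w i) r = eval y F := by
  induction r using MvPolynomial.induction_on with
  | C a => exact ⟨0, C a, fun y _ => by simp⟩
  | add r₁ r₂ h₁ h₂ =>
    obtain ⟨N₁, F₁, hF₁⟩ := h₁
    obtain ⟨N₂, F₂, hF₂⟩ := h₂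
    refine ⟨N₁ + N₂, X i₀ ^ N₂ * F₁ + X i₀ ^ N₁ * F₂, fun y hy => ?_⟩
    simp only [eval_add, eval_mul, eval_pow, eval_X, ← hF₁ y hy, ← hF₂ y hy]
    ring
  | mul_X r j h =>
    obtain ⟨N, F, hF⟩ := h
    refine ⟨N + w j, F * X j, fun y hy => ?_⟩
    have hw : y i₀ ^ w j ≠ 0 := pow_ne_zero _ hy
    simp only [eval_mul, eval_X, ← hF y hy]
    field_simp
    ring

end MvPolynomial

namespace BinaryCubic

/- For the binary cubic `x₀u³ + 3x₁u²v + 3x₂uv² + x₃v³`: the leading coefficients of its Hessian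
and of half its cubic covariant, and `-1/3` times its discriminant. -/
noncomputable def hessian : MvPolynomial (Fin 4) ℂ := X 0 * X 2 - X 1 ^ 2

noncomputable def cubicCovariant : MvPolynomial (Fin 4) ℂ :=
  X 1 ^ 3 + C (1 / 2 : ℂ) * X 0 ^ 2 * X 3 - C (3 / 2 : ℂ) * X 0 * X 1 * X 2

noncomputable def discriminant : MvPolynomial (Fin 4) ℂ :=
  C (2 : ℂ) * X 0 * X 1 * X 2 * X 3 - C (1 / 3 : ℂ) * X 0 ^ 2 * X 3 ^ 2
    + X 1 ^ 2 * X 2 ^ 2 - C (4 / 3 : ℂ) * X 1 ^ 3 * X 3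
    - C (4 / 3 : ℂ) * X 0 * X 2 ^ 3

noncomputable def generators : Fin 4 → MvPolynomial (Fin 4) ℂ :=
  ![X 0, hessian, cubicCovariant, discriminant]

theorem sigma_generators (t : ℂ) (i : Fin 4) : sigma t (generators i) = generators i := by
  refine MvPolynomial.funext fun x => ?_
  rw [sigma, eval_aeval]
  fin_cases i
  · simp [generators]
  all_goals simp [generators, hessian, cubicCovariant, discriminant]; ring

theorem cubicCovariant_sq_add_hessian_cube :
    cubicCovariant ^ 2 + hessian ^ 3 = C (-3 / 4 : ℂ) * X 0 ^ 2 * discriminant := by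
  refine MvPolynomial.funext fun x => ?_
  simp [hessian, cubicCovariant, discriminant]
  ring

theorem eval_aeval_generators (s z : ℂ) (F : MvPolynomial (Fin 4) ℂ) :
    eval ![0, s, 0, z] (aeval generators F) =
      eval ![0, -s ^ 2, s ^ 3, -(4 / 3) * s ^ 3 * z] F := by
  rw [eval_aeval]
  congr 2 with i
  fin_cases i <;> simp [generators, hessian, cubicCovariant, discriminant]

theorem exists_decomp_mod_X_zero_cusp {R : Type*} [CommRing R] (F : MvPolynomial (Fin 4) R) :
    ∃ (H G : MvPolynomial (Fin 4) R) (a b : MvPolynomial (Fin 2) R),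
      F = X 0 * H + (X 2 ^ 2 + X 1 ^ 3) * G + X 2 * rename ![1, 3] a + rename ![1, 3] b := by
  induction F using MvPolynomial.induction_on with
  | C c => exact ⟨0, 0, 0, C c, by simp⟩
  | add F₁ F₂ h₁ h₂ =>
    obtain ⟨H₁, G₁, a₁, b₁, rfl⟩ := h₁
    obtain ⟨H₂, G₂, a₂, b₂, rfl⟩ := h₂
    exact ⟨H₁ + H₂, G₁ + G₂, a₁ + a₂, b₁ + b₂, by simp only [map_add]; ring⟩
  | mul_X F i h =>
    obtain ⟨H, G, a, b, hF⟩ := h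
    fin_cases i
    · exact ⟨F, 0, 0, 0, by simp [mul_comm]⟩
    · exact ⟨H * X 1, G * X 1, a * X 0, b * X 0, by rw [hF]; simp; ring⟩
    · exact ⟨H * X 2, G * X 2 + rename ![1, 3] a, b, -(X 0 ^ 3 * a), by rw [hF]; simp; ring⟩
    · exact ⟨H * X 3, G * X 3, a * X 1, b * X 1, by rw [hF]; simp; ring⟩

theorem eq_zero_of_cube_mul_eval_add_eval_eq_zero {a b : MvPolynomial (Fin 2) ℂ}
    (h : ∀ s w : ℂ, s ≠ 0 → s ^ 3 * eval ![-s ^ 2, w] a + eval ![-s ^ 2, w] b = 0) :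
    a = 0 ∧ b = 0 := by
  have key : ∀ x : Fin 2 → ℂ, x 0 ≠ 0 → eval x a = 0 ∧ eval x b = 0 := by
    intro x hx
    obtain ⟨s, hs⟩ := IsAlgClosed.exists_pow_nat_eq (-x 0) two_pos
    have hs0 : s ≠ 0 := by rintro rfl; simp_all
    have hx' : x = ![-s ^ 2, x 1] := by
      funext i; fin_cases i <;> simp [hs]
    have hpos := h s (x 1) hs0
    have hneg := h (-s) (x 1) (neg_ne_zero.2 hs0)
    rw [neg_sq, Odd.neg_pow (by decide)] at hneg
    rw [hx']
    constructor
    · have : (2 * s ^ 3) * eval ![-s ^ 2, x 1] a = 0 := by linear_combination hpos - hneg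
      simpa [hs0] using this
    · linear_combination (hpos + hneg) / 2
  exact ⟨eq_of_eval_eq_of_ne_zero 0 fun x hx => by simpa using (key x hx).1,
    eq_of_eval_eq_of_ne_zero 0 fun x hx => by simpa using (key x hx).2⟩

theorem exists_eq_of_eval_aeval_generators_eq_zero (F : MvPolynomial (Fin 4) ℂ)
    (hF : ∀ s z : ℂ, eval ![0, s, 0, z] (aeval generators F) = 0) :
    ∃ H G, F = X 0 * H + (X 2 ^ 2 + X 1 ^ 3) * G := by
  obtain ⟨H, G, a, b, rfl⟩ := exists_decomp_mod_X_zero_cusp F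
  suffices a = 0 ∧ b = 0 by obtain ⟨rfl, rfl⟩ := this; exact ⟨H, G, by simp⟩
  refine eq_zero_of_cube_mul_eval_add_eval_eq_zero fun s w hs => ?_
  have hz : -(4 / 3) * s ^ 3 * (-3 * w / (4 * s ^ 3)) = w := by field_simp
  have := hF s (-3 * w / (4 * s ^ 3))
  rw [eval_aeval_generators, hz] at this
  have hv : (fun j => ![0, -s ^ 2, s ^ 3, w] (![1, 3] j)) = ![-s ^ 2, w] := by
    funext j; fin_cases j <;> rfl
  simp [eval_rename, Function.comp_def, hv] at this
  linear_combination this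

theorem mem_of_X_zero_mul_mem {q : MvPolynomial (Fin 4) ℂ}
    (hq : X 0 * q ∈ Algebra.adjoin ℂ (Set.range generators)) :
    q ∈ Algebra.adjoin ℂ (Set.range generators) := by
  rw [Algebra.adjoin_range_eq_range_aeval, AlgHom.mem_range] at hq ⊢
  obtain ⟨F, hF⟩ := hq
  obtain ⟨H, G, rfl⟩ := exists_eq_of_eval_aeval_generators_eq_zero F fun s z => by rw [hF]; simp
  refine ⟨H + C (-3 / 4 : ℂ) * X 0 * X 3 * G, mul_left_cancel₀ (X_ne_zero (0 : Fin 4)) ?_⟩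
  rw [← hF]
  simp only [map_add, map_mul, map_pow, aeval_X, aeval_C, algebraMap_eq]
  simp only [generators, Matrix.cons_val_zero, Matrix.cons_val_one, Matrix.cons_val_two,
    Matrix.cons_val_three, Matrix.head_cons, Matrix.tail_cons, cubicCovariant_sq_add_hessian_cube]
  ring

theorem eval_eq_eval_slice {p : MvPolynomial (Fin 4) ℂ} (hp : ∀ t, sigma t p = p)
    (x : Fin 4 → ℂ) (hx : x 0 ≠ 0) :
    eval x p = eval ![x 0, 0, eval x hessian / x 0, 2 * eval x cubicCovariant / x 0 ^ 2] p := by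
  -- `σ_t` with `t = -x₁/x₀` moves `x` to the slice `x₁ = 0` of its orbit.
  conv_lhs => rw [← hp (-x 1 / x 0), sigma, eval_aeval]
  congr 2 with i
  fin_cases i <;> simp [hessian, cubicCovariant] <;> field_simp <;> ring

theorem exists_X_zero_pow_mul_mem {p : MvPolynomial (Fin 4) ℂ} (hp : ∀ t, sigma t p = p) :
    ∃ N : ℕ, X 0 ^ N * p ∈ Algebra.adjoin ℂ (Set.range generators) := by
  obtain ⟨N, F, hF⟩ := exists_pow_mul_eval_div_eq (0 : Fin 4) ![0, 0, 1, 2] p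
  refine ⟨N, ?_⟩
  rw [Algebra.adjoin_range_eq_range_aeval, AlgHom.mem_range]
  refine ⟨aeval ![X 0, 0, X 1, C (2 : ℂ) * X 2] F, eq_of_eval_eq_of_ne_zero 0 fun x hx => ?_⟩
  set y : Fin 4 → ℂ := ![x 0, 0, eval x hessian, 2 * eval x cubicCovariant]
  have hy : eval x (aeval generators (aeval ![X 0, 0, X 1, C (2 : ℂ) * X 2] F)) = eval y F := by
    rw [comp_aeval_apply, eval_aeval]
    congr 2 with i
    fin_cases i <;> simp [y, generators]
  have hslice : (fun i => y i / y 0 ^ ![0, 0, 1, 2] i) =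
      ![x 0, 0, eval x hessian / x 0, 2 * eval x cubicCovariant / x 0 ^ 2] := by
    funext i; fin_cases i <;> simp [y]
  rw [hy, ← hF y hx, hslice, ← eval_eq_eval_slice hp x hx]
  simp [y]

theorem mem_of_X_zero_pow_mul_mem {q : MvPolynomial (Fin 4) ℂ} {N : ℕ}
    (hq : X 0 ^ N * q ∈ Algebra.adjoin ℂ (Set.range generators)) :
    q ∈ Algebra.adjoin ℂ (Set.range generators) := by
  induction N with
  | zero => simpa using hq
  | succ N ih => exact ih (mem_of_X_zero_mul_mem (by rwa [pow_succ', mul_assoc] at hq))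

theorem sigma_apply_of_mem_adjoin {p : MvPolynomial (Fin 4) ℂ}
    (hp : p ∈ Algebra.adjoin ℂ (Set.range generators)) (t : ℂ) : sigma t p = p :=
  AlgHom.eqOn_adjoin_iff (ψ := AlgHom.id ℂ _).2
    (by rintro _ ⟨i, rfl⟩; exact sigma_generators t i) hp

theorem range_generators :
    Set.range generators = {X 0, hessian, cubicCovariant, discriminant} := by
  simp only [generators, Matrix.range_cons, Matrix.range_empty, Set.union_empty,
    Set.singleton_union]

end BinaryCubic

open BinaryCubic in
/-- A polynomial `p ∈ ℂ[x₀,x₁,x₂,x₃]` is `σ`-invariant if and only if it lies in the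
`ℂ`-subalgebra generated by `x₀`, `x₀x₂ − x₁²`, `x₁³ + (1/2)x₀²x₃ − (3/2)x₀x₁x₂` and
`2x₀x₁x₂x₃ − (1/3)x₀²x₃² + x₁²x₂² − (4/3)x₁³x₃ − (4/3)x₀x₂³`. -/
theorem invariant_iff_mem_adjoin (p : MvPolynomial (Fin 4) ℂ) :
    (∀ t : ℂ, sigma t p = p) ↔
      p ∈ Algebra.adjoin ℂ
        ({X 0,
          X 0 * X 2 - X 1 ^ 2,
          X 1 ^ 3 + C (1 / 2 : ℂ) * X 0 ^ 2 * X 3 - C (3 / 2 : ℂ) * X 0 * X 1 * X 2,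
          C (2 : ℂ) * X 0 * X 1 * X 2 * X 3 - C (1 / 3 : ℂ) * X 0 ^ 2 * X 3 ^ 2
            + X 1 ^ 2 * X 2 ^ 2 - C (4 / 3 : ℂ) * X 1 ^ 3 * X 3
            - C (4 / 3 : ℂ) * X 0 * X 2 ^ 3} : Set (MvPolynomial (Fin 4) ℂ)) := by
  change _ ↔ p ∈ Algebra.adjoin ℂ ({X 0, hessian, cubicCovariant, discriminant} : Set _)
  rw [← range_generators]
  refine ⟨fun hp => ?_, sigma_apply_of_mem_adjoin⟩
  obtain ⟨N, hN⟩ := exists_X_zero_pow_mul_mem hp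
  exact mem_of_X_zero_pow_mul_mem hN
end

section
/- For a point (a₀,a₁,a₂,a₃) ∈ ℂ⁴, every σ-invariant polynomial p ∈ ℂ[x₀,x₁,x₂,x₃] with zero constant term vanishes at (a₀,a₁,a₂,a₃) if and only if a₀ = 0 and a₁ = 0. -/
open MvPolynomial

/-- Evaluating `σ_t p` at a point `c` is the same as evaluating `p` at the
translated point `g_t · c`. -/
lemma eval_sigma (t : ℂ) (c : Fin 4 → ℂ) (p : MvPolynomial (Fin 4) ℂ) :
    eval c (sigma t p) =
      eval ![c 0, c 1 + t * c 0, c 2 + 2*t*c 1 + t^2*c 0,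
             c 3 + 3*t*c 2 + 3*t^2*c 1 + t^3*c 0] p := by
  have h := MvPolynomial.comp_aeval (φ := MvPolynomial.aeval c) (f := ![X 0,
          X 1 + C t * X 0,
          X 2 + C (2 * t) * X 1 + C (t ^ 2) * X 0,
          X 3 + C (3 * t) * X 2 + C (3 * t ^ 2) * X 1 + C (t ^ 3) * X 0])
  have h2 := congrFun (congrArg DFunLike.coe h) p
  simp only [AlgHom.comp_apply] at h2
  have hv : (fun i => (aeval c) (![X 0,
          X 1 + C t * X 0,
          X 2 + C (2 * t) * X 1 + C (t ^ 2) * X 0,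
          X 3 + C (3 * t) * X 2 + C (3 * t ^ 2) * X 1 + C (t ^ 3) * X 0] i))
      = ![c 0, c 1 + t * c 0, c 2 + 2*t*c 1 + t^2*c 0,
             c 3 + 3*t*c 2 + 3*t^2*c 1 + t^3*c 0] := by
    funext i; fin_cases i <;> simp
  rw [hv] at h2
  exact h2

/-- Evaluating (at `s`) a multivariate polynomial whose variables have been
substituted by one-variable polynomials. -/
lemma eval_poly_aeval (s : ℂ) (v : Fin 4 → Polynomial ℂ) (p : MvPolynomial (Fin 4) ℂ) :
    Polynomial.eval s (MvPolynomial.aeval v p) =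
      eval (fun i => Polynomial.eval s (v i)) p := by
  have h := MvPolynomial.comp_aeval (φ := Polynomial.aeval s) (f := v)
  have h2 := congrFun (congrArg DFunLike.coe h) p
  simp only [AlgHom.comp_apply, Polynomial.coe_aeval_eq_eval] at h2
  exact h2

/-- Two complex polynomials agreeing away from `0` are equal. -/
lemma poly_ext {F G : Polynomial ℂ} (h : ∀ s : ℂ, s ≠ 0 → F.eval s = G.eval s) : F = G := by
  have hinf : ({(0:ℂ)}ᶜ : Set ℂ).Infinite := (Set.finite_singleton 0).infinite_compl
  have hz : F - G = 0 := by
    apply Polynomial.eq_zero_of_infinite_isRoot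
    apply hinf.mono
    intro s hs
    simp only [Set.mem_setOf_eq, Polynomial.IsRoot, Polynomial.eval_sub]
    rw [h s hs]; ring
  exact sub_eq_zero.mp hz

/-- Every `σ`-invariant polynomial with zero constant term vanishes at
`(a₀,a₁,a₂,a₃) ∈ ℂ⁴` if and only if `a₀ = 0` and `a₁ = 0`. -/
theorem all_invariants_vanish_iff (a : Fin 4 → ℂ) :
    (∀ p : MvPolynomial (Fin 4) ℂ,
        (∀ t : ℂ, sigma t p = p) → constantCoeff p = 0 → eval a p = 0) ↔
      (a 0 = 0 ∧ a 1 = 0) := by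
  constructor
  · intro h
    have h0 : a 0 = 0 := by
      have := h (X 0) (fun t => by simp [sigma]) (by simp)
      simpa using this
    refine ⟨h0, ?_⟩
    have h1 := h (X 1 ^ 2 - X 0 * X 2)
      (fun t => by simp [sigma, C_mul, C_pow, map_ofNat]; ring) (by simp)
    simp only [map_sub, map_mul, map_pow, eval_X, h0, zero_mul] at h1
    have : a 1 ^ 2 = 0 := by linear_combination h1
    exact (pow_eq_zero_iff two_ne_zero).mp this
  · rintro ⟨h0, h1⟩ p hinv hc
    -- invariance along orbits
    have heval : ∀ (t : ℂ) (c : Fin 4 → ℂ),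
        eval c p = eval ![c 0, c 1 + t * c 0, c 2 + 2*t*c 1 + t^2*c 0,
             c 3 + 3*t*c 2 + 3*t^2*c 1 + t^3*c 0] p := by
      intro t c
      conv_lhs => rw [← hinv t]
      exact eval_sigma t c p
    -- Step 1 : p(0,0,0,e) = 0
    have step1 : ∀ e : ℂ, eval ![0,0,0,e] p = 0 := by
      intro e
      have hFG : (aeval ![Polynomial.C e * Polynomial.X^3, Polynomial.C e * Polynomial.X^2,
            Polynomial.C e * Polynomial.X, Polynomial.C e] p : Polynomial ℂ)
          = aeval ![Polynomial.C e * Polynomial.X^3, 0, 0, 0] p := by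
        apply poly_ext
        intro s hs
        rw [eval_poly_aeval, eval_poly_aeval]
        have h1' := heval (1/s) ![e * s^3, 0, 0, 0]
        have e1 : (fun i => Polynomial.eval s (![Polynomial.C e * Polynomial.X^3,
            Polynomial.C e * Polynomial.X^2, Polynomial.C e * Polynomial.X,
            Polynomial.C e] i)) = ![e * s^3, e * s^2, e * s, e] := by
          funext i; fin_cases i <;> simp
        have e2 : (fun i => Polynomial.eval s (![Polynomial.C e * Polynomial.X^3,
            (0:Polynomial ℂ), 0, 0] i)) = ![e * s^3, 0, 0, 0] := by
          funext i; fin_cases i <;> simp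
        rw [e1, e2, h1']
        refine congrArg (fun v => eval v p) ?_
        funext i
        fin_cases i <;> (simp; try field_simp; try ring)
      have h0' := congrArg (Polynomial.eval 0) hFG
      rw [eval_poly_aeval, eval_poly_aeval] at h0'
      have e1 : (fun i => Polynomial.eval 0 (![Polynomial.C e * Polynomial.X^3,
          Polynomial.C e * Polynomial.X^2, Polynomial.C e * Polynomial.X,
          Polynomial.C e] i)) = ![0, 0, 0, e] := by
        funext i; fin_cases i <;> simp
      have e2 : (fun i => Polynomial.eval 0 (![Polynomial.C e * Polynomial.X^3,
          (0:Polynomial ℂ), 0, 0] i)) = ![0, 0, 0, 0] := by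
        funext i; fin_cases i <;> simp
      rw [e1, e2] at h0'
      have hzero : (![0,0,0,0] : Fin 4 → ℂ) = 0 := by
        funext i; fin_cases i <;> simp
      rw [h0', hzero, eval_zero]
      exact hc
    -- Step 2 : p(0,0,A,e) = p(0,0,0,e)
    have step2 : ∀ (A e : ℂ), eval ![0,0,A,e] p = eval ![0,0,0,e] p := by
      intro A e
      have hFG : (aeval ![Polynomial.C (3*A) * Polynomial.X^2, Polynomial.C A * Polynomial.X,
            0, Polynomial.C e] p : Polynomial ℂ)
          = aeval ![Polynomial.C (3*A) * Polynomial.X^2, Polynomial.C (-2*A) * Polynomial.X,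
            Polynomial.C A, Polynomial.C e] p := by
        apply poly_ext
        intro s hs
        rw [eval_poly_aeval, eval_poly_aeval]
        have h1' := heval (1/s) ![3*A*s^2, -2*A*s, A, e]
        have e1 : (fun i => Polynomial.eval s (![Polynomial.C (3*A) * Polynomial.X^2,
            Polynomial.C A * Polynomial.X, (0:Polynomial ℂ), Polynomial.C e] i))
            = ![3*A*s^2, A*s, 0, e] := by
          funext i; fin_cases i <;> simp
        have e2 : (fun i => Polynomial.eval s (![Polynomial.C (3*A) * Polynomial.X^2,
            Polynomial.C (-2*A) * Polynomial.X, Polynomial.C A, Polynomial.C e] i))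
            = ![3*A*s^2, -2*A*s, A, e] := by
          funext i; fin_cases i <;> simp
        rw [e1, e2, h1']
        refine congrArg (fun v => eval v p) ?_
        funext i
        fin_cases i <;> (simp; try field_simp; try ring)
      have h0' := congrArg (Polynomial.eval 0) hFG
      rw [eval_poly_aeval, eval_poly_aeval] at h0'
      have e1 : (fun i => Polynomial.eval 0 (![Polynomial.C (3*A) * Polynomial.X^2,
          Polynomial.C A * Polynomial.X, (0:Polynomial ℂ), Polynomial.C e] i))
          = ![0, 0, 0, e] := by
        funext i; fin_cases i <;> simp
      have e2 : (fun i => Polynomial.eval 0 (![Polynomial.C (3*A) * Polynomial.X^2,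
          Polynomial.C (-2*A) * Polynomial.X, Polynomial.C A, Polynomial.C e] i))
          = ![0, 0, A, e] := by
        funext i; fin_cases i <;> simp
      rw [e1, e2] at h0'
      exact h0'.symm
    have ha : a = ![0, 0, a 2, a 3] := by
      funext i; fin_cases i <;> simp [h0, h1]
    rw [ha, step2, step1]
end
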